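/- arXiv:2006.15876 — 2 statements merged into one kernel-verified Lean document; each statement's English description precedes it below -/
import Mathlib

section
/- For each integer k with 1 ≤ k ≤ 6, the polynomial p_k(ζ) = ∑_{i=1}^{k} (1−ζ)^{i−1} / i! has no zero in the closed unit disc {ζ ∈ ℂ : |ζ| ≤ 1}; consequently δ_k(ζ) = (1−ζ) p_k(ζ), so the zero of δ_k at ζ = 1 is simple and is its only zero in the closed unit disc. -/
/-!
In the variable w = 1 - ζ = x + iy the closed unit disc becomes the disc |w - 1| ≤ 1, that is
x ≥ 0 and x² + y² ≤ 2x, and p_k becomes the truncated series ∑_{i<k} wⁱ/(i+1)!.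
For k ≤ 6 the real part of this truncation is positive on that disc: it is a polynomial in x and
y² whose positivity follows from x ≥ 0 and 2x - x² - y² ≥ 0, with the products x·y⁴, x⁵ and
y²(2x - x² - y²) as the only nonlinear certificates needed.
-/

open Real

/-- The k-th order BDF generating polynomial δ_k(ζ) = ∑_{i=1}^{k} (1-ζ)^i / i!. -/
noncomputable def bdfDelta (k : ℕ) (ζ : ℂ) : ℂ :=
  ∑ i ∈ Finset.Icc 1 k, (1 - ζ) ^ i / (Nat.factorial i : ℂ)

/-- The cofactor polynomial p_k(ζ) = ∑_{i=1}^{k} (1-ζ)^{i-1} / i!. -/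
noncomputable def bdfP (k : ℕ) (ζ : ℂ) : ℂ :=
  ∑ i ∈ Finset.Icc 1 k, (1 - ζ) ^ (i - 1) / (Nat.factorial i : ℂ)

theorem bdfDelta_eq_mul_bdfP (k : ℕ) (ζ : ℂ) : bdfDelta k ζ = (1 - ζ) * bdfP k ζ := by
  rw [bdfDelta, bdfP, Finset.mul_sum]
  refine Finset.sum_congr rfl fun i hi => ?_
  rw [← mul_div_assoc, ← pow_succ', Nat.sub_add_cancel (Finset.mem_Icc.mp hi).1]

theorem bdfP_zero (ζ : ℂ) : bdfP 0 ζ = 0 := rfl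

theorem bdfP_succ (k : ℕ) (ζ : ℂ) :
    bdfP (k + 1) ζ = bdfP k ζ + (1 - ζ) ^ k / ((k + 1).factorial : ℂ) := by
  rw [bdfP, bdfP, Finset.sum_Icc_succ_top (Nat.le_add_left 1 k), Nat.add_sub_cancel]

theorem Complex.re_sq_add_im_sq_le_two_mul_re {w : ℂ} (h : ‖1 - w‖ ≤ 1) :
    w.re ^ 2 + w.im ^ 2 ≤ 2 * w.re := by
  have hsq : ‖1 - w‖ ^ 2 = (1 - w.re) ^ 2 + w.im ^ 2 := by
    rw [Complex.sq_norm, Complex.normSq_apply]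
    simp only [Complex.sub_re, Complex.one_re, Complex.sub_im, Complex.one_im]
    ring
  nlinarith [norm_nonneg (1 - w)]

theorem re_bdfP_pos {k : ℕ} (hk1 : 1 ≤ k) (hk6 : k ≤ 6) {ζ : ℂ} (hζ : ‖ζ‖ ≤ 1) :
    0 < (bdfP k ζ).re := by
  obtain ⟨w, rfl⟩ : ∃ w, ζ = 1 - w := ⟨1 - ζ, by ring⟩
  have hd : 0 ≤ 2 * w.re - w.re ^ 2 - w.im ^ 2 := by
    linarith [Complex.re_sq_add_im_sq_le_two_mul_re hζ]
  have hx : 0 ≤ w.re := by nlinarith [sq_nonneg w.re, sq_nonneg w.im]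
  interval_cases k <;>
    simp only [bdfP_succ, bdfP_zero, sub_sub_cancel, pow_zero, Nat.factorial, Nat.succ_eq_add_one,
      zero_add, mul_one, Nat.cast_one, ne_eq, one_ne_zero, not_false_eq_true, div_self, pow_succ,
      one_mul, Nat.reduceAdd, Nat.cast_ofNat, Nat.reduceMul, Complex.add_re, Complex.one_re,
      Complex.div_ofNat_re, Complex.mul_re, Complex.mul_im, gt_iff_lt, zero_lt_one] <;>
    nlinarith [mul_nonneg hx (sq_nonneg (w.im ^ 2)), pow_nonneg hx 5,
      mul_nonneg hd (sq_nonneg w.im)]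

/-- p_k has no zero in the closed unit disc and δ_k(ζ) = (1−ζ)·p_k(ζ), so the
zero of δ_k at ζ = 1 is simple and is its only zero in the closed unit disc. -/
theorem bdfDelta_simple_zero (k : ℕ) (hk1 : 1 ≤ k) (hk6 : k ≤ 6) :
    (∀ ζ : ℂ, ‖ζ‖ ≤ 1 → bdfP k ζ ≠ 0) ∧
      ∀ ζ : ℂ, bdfDelta k ζ = (1 - ζ) * bdfP k ζ := by
  refine ⟨fun ζ hζ h0 => ?_, bdfDelta_eq_mul_bdfP k⟩
  simpa [h0] using re_bdfP_pos hk1 hk6 hζ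
end

section
/- For every θ ∈ (π/2, 3π/4] there exists C > 0 such that for every y ∈ ℂ with y ≠ 0, |arg y| ≤ θ and |Im y| ≤ π, one has 1 − e^{−y} ≠ 0 and |y e^{−y}| ≤ C |1 − e^{−y}|. -/
/-!
Since `1 - e^{-y} = e^{-y} (e^y - 1)`, the claim is `‖y‖ ≤ C ‖e^y - 1‖`. In the sector
`|arg y| ≤ 3π/4` one has `-Re y ≤ |Im y| ≤ π`, so `y` lies in the half-strip `Re y ≥ -π`,
`|Im y| ≤ π`, where `e^y = 1` only at `y = 0`. Near `0`, `e^y - 1 ≈ y`; for `Re y ≥ 1`,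
`‖e^y - 1‖ ≥ e^{Re y} - 1 ≥ Re y`; on the compact remainder the continuous ratio
`‖y‖ / ‖e^y - 1‖` is bounded.
-/

open Real

theorem IsCompact.exists_norm_le_mul_norm {X E F : Type*} [TopologicalSpace X]
    [SeminormedAddCommGroup E] [NormedAddCommGroup F] {K : Set X} (hK : IsCompact K)
    {f : X → E} {g : X → F} (hf : ContinuousOn f K) (hg : ContinuousOn g K)
    (hg0 : ∀ x ∈ K, g x ≠ 0) : ∃ C, ∀ x ∈ K, ‖f x‖ ≤ C * ‖g x‖ := by
  obtain ⟨C, hC⟩ := hK.exists_bound_of_continuousOn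
    (hf.norm.div hg.norm fun x hx => norm_ne_zero_iff.2 (hg0 x hx))
  refine ⟨C, fun x hx => ?_⟩
  have hgx : 0 < ‖g x‖ := norm_pos_iff.2 (hg0 x hx)
  have hx' : ‖f x‖ / ‖g x‖ ≤ C := (le_abs_self _).trans (hC x hx)
  rwa [div_le_iff₀ hgx] at hx'

/- Since `cos x + sin x = √2 sin (x + π / 4)`. -/
theorem Real.cos_add_sin_nonneg {x : ℝ} (h₀ : -(π / 4) ≤ x) (h₁ : x ≤ 3 * π / 4) :
    0 ≤ cos x + sin x := by
  have hsin : 0 ≤ sin (x + π / 4) := sin_nonneg_of_nonneg_of_le_pi (by linarith) (by linarith)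
  rw [sin_add, cos_pi_div_four, sin_pi_div_four] at hsin
  nlinarith [sqrt_pos.2 (two_pos : (0 : ℝ) < 2)]

theorem Real.cos_add_abs_sin_nonneg {x : ℝ} (hx : |x| ≤ 3 * π / 4) : 0 ≤ cos x + |sin x| := by
  rw [abs_sin_eq_sin_abs_of_abs_le_pi (by linarith [pi_pos]), ← cos_abs]
  exact cos_add_sin_nonneg (by linarith [abs_nonneg x, pi_pos]) hx

namespace Complex

theorem neg_re_le_abs_im_of_abs_arg_le {z : ℂ} (hz : |arg z| ≤ 3 * π / 4) : -z.re ≤ |z.im| := by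
  rw [← norm_mul_cos_arg, ← norm_mul_sin_arg, abs_mul, abs_norm]
  nlinarith [mul_nonneg (norm_nonneg z) (cos_add_abs_sin_nonneg hz)]

theorem exp_ne_one_of_abs_im_lt {z : ℂ} (hz : z ≠ 0) (him : |z.im| < 2 * π) : exp z ≠ 1 := by
  rw [Ne, exp_eq_one_iff]
  rintro ⟨n, rfl⟩
  have hn : n ≠ 0 := by rintro rfl; simp at hz
  have hn' : (1 : ℝ) ≤ |(n : ℝ)| := by exact_mod_cast Int.one_le_abs hn
  have him' : |((n : ℂ) * (2 * π * I)).im| = |(n : ℝ)| * (2 * π) := by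
    simp [abs_mul, abs_of_pos pi_pos]
  nlinarith [pi_pos]

theorem norm_le_two_mul_norm_exp_sub_one {z : ℂ} (hz : ‖z‖ ≤ 1 / 2) : ‖z‖ ≤ 2 * ‖exp z - 1‖ := by
  have h := norm_exp_sub_one_sub_id_le (hz.trans (by norm_num))
  have h' : ‖z‖ ≤ ‖exp z - 1‖ + ‖exp z - 1 - z‖ := by
    simpa using norm_sub_le (exp z - 1) (exp z - 1 - z)
  nlinarith [norm_nonneg z]

theorem norm_le_mul_norm_exp_sub_one_of_one_le_re {z : ℂ} (hz : 1 ≤ z.re) :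
    ‖z‖ ≤ (1 + |z.im|) * ‖exp z - 1‖ := by
  have hexp : Real.exp z.re - 1 ≤ ‖exp z - 1‖ := by
    simpa [norm_exp] using norm_sub_norm_le (exp z) 1
  calc ‖z‖ ≤ |z.re| + |z.im| := norm_le_abs_re_add_abs_im z
    _ ≤ (1 + |z.im|) * z.re := by rw [abs_of_pos (by linarith)]; nlinarith [abs_nonneg z.im]
    _ ≤ (1 + |z.im|) * (Real.exp z.re - 1) := by gcongr; linarith [add_one_le_exp z.re]
    _ ≤ (1 + |z.im|) * ‖exp z - 1‖ := by gcongr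

theorem exists_norm_le_mul_norm_exp_sub_one (a b : ℝ) (hb : b < 2 * π) :
    ∃ C, ∀ z : ℂ, -a ≤ z.re → |z.im| ≤ b → ‖z‖ ≤ C * ‖exp z - 1‖ := by
  set K := {z : ℂ | 1 / 2 ≤ ‖z‖} ∩ (Set.Icc (-a) 1 ×ℂ Set.Icc (-b) b)
  have hK : IsCompact K := (isCompact_Icc.reProdIm isCompact_Icc).inter_left
    (isClosed_le continuous_const continuous_norm)
  have hK0 : ∀ z ∈ K, exp z - 1 ≠ 0 := fun z hz => sub_ne_zero.2 <|
    exp_ne_one_of_abs_im_lt (norm_pos_iff.1 (by linarith [hz.1.out]))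
      ((abs_le.2 hz.2.2).trans_lt hb)
  obtain ⟨C, hC⟩ := hK.exists_norm_le_mul_norm continuousOn_id
    (continuous_exp.sub continuous_const).continuousOn hK0
  refine ⟨max C (max 2 (1 + b)), fun z hre him => ?_⟩
  rcases le_or_gt ‖z‖ (1 / 2) with hsmall | hlarge
  · calc ‖z‖ ≤ 2 * ‖exp z - 1‖ := norm_le_two_mul_norm_exp_sub_one hsmall
      _ ≤ _ := by gcongr; exact (le_max_left _ _).trans (le_max_right _ _)
  rcases le_or_gt 1 z.re with hbig | hmid
  · calc ‖z‖ ≤ (1 + |z.im|) * ‖exp z - 1‖ := norm_le_mul_norm_exp_sub_one_of_one_le_re hbig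
      _ ≤ _ := by gcongr; exact le_max_of_le_right (le_max_of_le_right (by linarith))
  · calc ‖z‖ ≤ C * ‖exp z - 1‖ := hC z ⟨hlarge.le, ⟨hre, hmid.le⟩, abs_le.1 him⟩
      _ ≤ _ := by gcongr; exact le_max_left _ _

end Complex

/-- The bound |y e^{−y}| ≤ C|1 − e^{−y}| for y in a sector with bounded imaginary part. -/
theorem sector_exp_ratio_bound (θ : ℝ) (hθ : θ ∈ Set.Ioc (π / 2) (3 * π / 4)) :
    ∃ C : ℝ, 0 < C ∧ ∀ y : ℂ, y ≠ 0 → |y.arg| ≤ θ → |y.im| ≤ π →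
      1 - Complex.exp (-y) ≠ 0 ∧
        ‖y * Complex.exp (-y)‖ ≤ C * ‖1 - Complex.exp (-y)‖ := by
  obtain ⟨C, hC⟩ := Complex.exists_norm_le_mul_norm_exp_sub_one π π (by linarith [pi_pos])
  refine ⟨max C 1, by positivity, fun y hy harg him => ?_⟩
  have hre : -π ≤ y.re := by
    linarith [Complex.neg_re_le_abs_im_of_abs_arg_le (harg.trans hθ.2)]
  have hexp : Complex.exp y - 1 ≠ 0 :=
    sub_ne_zero.2 (Complex.exp_ne_one_of_abs_im_lt hy (by linarith [pi_pos]))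
  have hfactor : 1 - Complex.exp (-y) = Complex.exp (-y) * (Complex.exp y - 1) := by
    rw [mul_sub, ← Complex.exp_add, neg_add_cancel, Complex.exp_zero, mul_one]
  refine ⟨hfactor ▸ mul_ne_zero (Complex.exp_ne_zero _) hexp, ?_⟩
  rw [hfactor, norm_mul, norm_mul, mul_left_comm, mul_comm ‖y‖]
  gcongr
  exact (hC y hre him).trans (by gcongr; exact le_max_left _ _)
end
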